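/- arXiv:math/0605470 — 4 statements merged into one kernel-verified Lean document; each statement's English description precedes it below -/
import Mathlib

section
/- Let G = (G, ε, δ) be a comonad on a category B arising from an adjunction F ⊣ U with F : A → B. The comparison functor K : A → B_G to the Eilenberg–Moore category of G-coalgebras has a right adjoint if and only if for each G-coalgebra (b, θ_b), the pair of morphisms (U(θ_b), η_{U(b)}) : U(b) ⇉ UFU(b) has an equalizer in A. -/
/-!
A coalgebra map `K X ⟶ (b, θ_b)` is a map `g : F X ⟶ b` with `F η_X ≫ F U g = g ≫ θ_b`; under the
adjunction this says exactly that the transpose `X ⟶ U b` equalizes `U θ_b` and `η_{U b}`. So,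
naturally in `X`, coalgebra maps `K X ⟶ b` are forks over that pair with vertex `X`, and the comma
category `K ↓ b` is the category of such forks. A right adjoint of `K` is a choice of terminal
object in each `K ↓ b`, and an equalizer is a terminal fork.
-/

open CategoryTheory CategoryTheory.Limits

namespace CategoryTheory

variable {A : Type*} [Category A]

section

variable {C : Type*} [Category C] {K : A ⥤ C} {b : C} {Y Z : A} {f g : Y ⟶ Z}

def costructuredArrowEquivForkOfHomEquiv
    (e : ∀ X, (K.obj X ⟶ b) ≃ {h : X ⟶ Y // h ≫ f = h ≫ g})
    (he : ∀ {X X'} (u : X' ⟶ X) (φ : K.obj X ⟶ b), (e X' (K.map u ≫ φ)).1 = u ≫ (e X φ).1) :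
    CostructuredArrow K b ≌ Fork f g :=
  Equivalence.mk
    { obj φ := Fork.ofι (e φ.left φ.hom).1 (e φ.left φ.hom).2
      map {φ ψ} m := Fork.mkHom m.left <|
        (he _ _).symm.trans (congr_arg (fun k => (e _ k).1) (CostructuredArrow.w m)) }
    { obj c := CostructuredArrow.mk ((e c.pt).symm ⟨c.ι, c.condition⟩)
      map {c d} m := CostructuredArrow.homMk m.hom <| by
        apply (e c.pt).injective
        ext
        simp [he] }
    (NatIso.ofComponents (fun φ => CostructuredArrow.isoMk (Iso.refl _) <| by
      simp only [Functor.id_obj, Iso.refl_hom, Functor.map_id, Category.id_comp]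
      exact (congr_arg _ (Subtype.coe_eta _ _)).trans ((e _).symm_apply_apply _))
      (fun m => by ext; exact (Category.comp_id m.left).trans (Category.id_comp m.left).symm))
    (NatIso.ofComponents (fun c => Fork.ext (Iso.refl _) (by simp)) (fun _ => by ext; simp))

end

namespace Comonad

variable {B : Type*} [Category B] {F : A ⥤ B} {U : B ⥤ A} (adj : F ⊣ U)

lemma comparison_hom_condition_iff_fork_condition {X : A} (b : adj.toComonad.Coalgebra)
    (g : F.obj X ⟶ b.A) :
    F.map (adj.unit.app X) ≫ F.map (U.map g) = g ≫ b.a ↔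
      adj.homEquiv X b.A g ≫ U.map b.a = adj.homEquiv X b.A g ≫ adj.unit.app (U.obj b.A) := by
  have transpose_left : adj.homEquiv X (F.obj (U.obj b.A))
      (F.map (adj.unit.app X) ≫ F.map (U.map g)) =
        adj.homEquiv X b.A g ≫ adj.unit.app (U.obj b.A) := by
    simp [Adjunction.homEquiv_unit]
  have transpose_right : adj.homEquiv X (F.obj (U.obj b.A)) (g ≫ b.a) =
      adj.homEquiv X b.A g ≫ U.map b.a :=
    adj.homEquiv_naturality_right _ _
  -- `rw` cannot be used: `b.a` lands in `adj.toComonad.obj b.A`, which is `F.obj (U.obj b.A)` only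
  -- after unfolding `Adjunction.toComonad`.
  exact (adj.homEquiv X _).apply_eq_iff_eq.symm.trans
    ((Eq.congr transpose_left transpose_right).trans eq_comm)

def comparisonHomEquivFork (b : adj.toComonad.Coalgebra) (X : A) :
    ((comparison adj).obj X ⟶ b) ≃
      {h : X ⟶ U.obj b.A // h ≫ U.map b.a = h ≫ adj.unit.app (U.obj b.A)} where
  toFun φ := ⟨adj.homEquiv _ _ φ.f, (comparison_hom_condition_iff_fork_condition adj b φ.f).1 φ.h⟩
  invFun h := ⟨(adj.homEquiv _ _).symm h.1,
    (comparison_hom_condition_iff_fork_condition adj b _).2 <| by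
      rw [Equiv.apply_symm_apply]; exact h.2⟩
  left_inv φ := by ext; exact (adj.homEquiv _ _).symm_apply_apply _
  right_inv h := by ext; exact (adj.homEquiv _ _).apply_symm_apply _

lemma comparisonHomEquivFork_comp (b : adj.toComonad.Coalgebra) {X X' : A} (u : X' ⟶ X)
    (φ : (comparison adj).obj X ⟶ b) :
    (comparisonHomEquivFork adj b X' ((comparison adj).map u ≫ φ)).1 =
      u ≫ (comparisonHomEquivFork adj b X φ).1 :=
  adj.homEquiv_naturality_left u φ.f

end Comonad

end CategoryTheory

/-- **Beck's theorem, part 1.** For an adjunction `F ⊣ U` with induced comonad `G = FU` on `B`,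
the comparison functor `K : A ⥤ B_G` to the Eilenberg–Moore category of `G`-coalgebras has a
right adjoint if and only if for each `G`-coalgebra `(b, θ_b)` the pair of morphisms
`(U(θ_b), η_{U(b)}) : U(b) ⇉ UFU(b)` has an equalizer in `A`. -/
theorem comparison_isLeftAdjoint_iff_hasEqualizers
    {A : Type*} [Category A] {B : Type*} [Category B]
    (F : A ⥤ B) (U : B ⥤ A) (adj : F ⊣ U) :
    (Comonad.comparison adj).IsLeftAdjoint ↔
      ∀ b : adj.toComonad.Coalgebra,
        HasEqualizer (U.map b.a) (adj.unit.app (U.obj b.A)) := by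
  rw [isLeftAdjoint_iff_hasTerminal_costructuredArrow]
  refine forall_congr' fun b => ?_
  rw [(costructuredArrowEquivForkOfHomEquiv (Comonad.comparisonHomEquivFork adj b)
    (Comonad.comparisonHomEquivFork_comp adj b)).hasTerminal_iff]
  exact (hasLimit_iff_hasTerminal_cone _).symm
end

section
/- Let i : B → S be an injective ring homomorphism. The subset I^l_B(S) of I_B(S) consisting of those B-subbimodules I ⊆ S for which the multiplication map m^l_I : S ⊗_B I → S, s ⊗ x ↦ sx, is bijective, is a submonoid of I_B(S). -/
open scoped TensorProduct

set_option linter.unusedSectionVars false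
set_option linter.unusedVariables false

noncomputable section

namespace Gro

variable (B : Type) [Ring B] (M N : Type) [AddCommGroup M] [AddCommGroup N]
variable (ρ : B → M →+ M) (lam : B → N →+ N)

/-- The subgroup of relations for the balanced tensor product over `B`. -/
def trel : AddSubgroup (M ⊗[ℤ] N) :=
  AddSubgroup.closure {x | ∃ (m : M) (b : B) (n : N), x = (ρ b m) ⊗ₜ[ℤ] n - m ⊗ₜ[ℤ] (lam b n)}

/-- The balanced tensor product `M ⊗_B N` of a right `B`-module and a left `B`-module,
realized as a quotient of the tensor product of abelian groups. -/
def TP := (M ⊗[ℤ] N) ⧸ trel B M N ρ lam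

instance : AddCommGroup (TP B M N ρ lam) := QuotientAddGroup.Quotient.addCommGroup _

variable {B M N}

/-- The canonical bilinear map into the balanced tensor product. -/
def tp (m : M) (n : N) : TP B M N ρ lam := QuotientAddGroup.mk (m ⊗ₜ[ℤ] n)

theorem tp_rel (b : B) (m : M) (n : N) : tp ρ lam (ρ b m) n = tp ρ lam m (lam b n) := by
  unfold tp
  exact QuotientAddGroup.eq_iff_sub_mem.2 (AddSubgroup.subset_closure ⟨m, b, n, rfl⟩)

theorem tp_add_left (m m' : M) (n : N) :
    tp ρ lam (m + m') n = tp ρ lam m n + tp ρ lam m' n := by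
  unfold tp
  rw [TensorProduct.add_tmul]; first | exact QuotientAddGroup.mk_add (N := trel B M N ρ lam) _ _ | rfl

theorem tp_add_right (m : M) (n n' : N) :
    tp ρ lam m (n + n') = tp ρ lam m n + tp ρ lam m n' := by
  unfold tp
  rw [TensorProduct.tmul_add]; first | exact QuotientAddGroup.mk_add (N := trel B M N ρ lam) _ _ | rfl

theorem tp_zero_left (n : N) : tp ρ lam (0 : M) n = 0 := by
  unfold tp; rw [TensorProduct.zero_tmul]; rfl

theorem tp_zero_right (m : M) : tp ρ lam m (0 : N) = 0 := by
  unfold tp; rw [TensorProduct.tmul_zero]; rfl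

/-- Lift a balanced biadditive map to the balanced tensor product. -/
def liftTP {P : Type} [AddCommGroup P] (f : M →+ N →+ P)
    (hf : ∀ (m : M) (b : B) (n : N), f (ρ b m) n = f m (lam b n)) :
    TP B M N ρ lam →+ P :=
  QuotientAddGroup.lift _ (TensorProduct.liftAddHom f (fun z m n => by
      simp [map_zsmul, AddMonoidHom.map_zsmul]))
    (by
      refine (AddSubgroup.closure_le _).2 ?_
      rintro x ⟨m, b, n, rfl⟩
      simp only [SetLike.mem_coe, AddMonoidHom.mem_ker, map_sub,
        TensorProduct.liftAddHom_tmul, hf m b n, sub_self])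

@[simp] theorem liftTP_tp {P : Type} [AddCommGroup P] (f : M →+ N →+ P) (hf) (m : M) (n : N) :
    liftTP ρ lam f hf (tp ρ lam m n) = f m n := rfl

/-- The canonical map as a biadditive map. -/
def tpHom : M →+ N →+ TP B M N ρ lam where
  toFun m := AddMonoidHom.mk' (fun n => tp ρ lam m n) (fun n n' => tp_add_right ρ lam m n n')
  map_zero' := by ext n; exact tp_zero_left ρ lam n
  map_add' m m' := by ext n; exact tp_add_left ρ lam m m' n

@[simp] theorem tpHom_apply (m : M) (n : N) : tpHom ρ lam m n = tp ρ lam m n := rfl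

@[elab_as_elim]
theorem tp_induction {p : TP B M N ρ lam → Prop}
    (tmul : ∀ m n, p (tp ρ lam m n)) (zero : p 0)
    (add : ∀ x y, p x → p y → p (x + y)) (neg : ∀ x, p x → p (-x)) (x : TP B M N ρ lam) : p x := by
  obtain ⟨y, rfl⟩ := QuotientAddGroup.mk_surjective x
  induction y using TensorProduct.induction_on with
  | zero => exact zero
  | tmul m n => exact tmul m n
  | add a b ha hb => rw [QuotientAddGroup.mk_add]; exact add _ _ ha hb

theorem hom_ext {P : Type} [AddCommGroup P] {φ ψ : TP B M N ρ lam →+ P}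
    (h : ∀ m n, φ (tp ρ lam m n) = ψ (tp ρ lam m n)) : φ = ψ := by
  ext x
  induction x using tp_induction ρ lam with
  | tmul m n => exact h m n
  | zero => simp
  | add a b ha hb => simp [ha, hb]
  | neg a ha => simp [ha]

end Gro
end
namespace Gro

noncomputable section

variable {B S : Type} [Ring B] [Ring S]

/-- Right action of `B` on `S` via `i`. -/
def rAct (i : B →+* S) (b : B) : S →+ S := AddMonoidHom.mulRight (i b)

/-- Left action of `B` on `S` via `i`. -/
def lAct (i : B →+* S) (b : B) : S →+ S := AddMonoidHom.mulLeft (i b)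

/-- The Sweedler coring `S ⊗_B S` of a ring extension `i : B →+* S`. -/
def Sw (i : B →+* S) : Type := TP B S S (rAct i) (lAct i)

instance (i : B →+* S) : AddCommGroup (Sw i) :=
  inferInstanceAs (AddCommGroup (TP B S S (rAct i) (lAct i)))

/-- The element `s ⊗_B t` of the Sweedler coring. -/
def swMk (i : B →+* S) (s t : S) : Sw i := tp (rAct i) (lAct i) s t

theorem swMk_rel (i : B →+* S) (b : B) (s t : S) :
    swMk i (s * i b) t = swMk i s (i b * t) :=
  tp_rel (rAct i) (lAct i) b s t

theorem swMk_add_left (i : B →+* S) (s s' t : S) :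
    swMk i (s + s') t = swMk i s t + swMk i s' t := tp_add_left _ _ _ _ _

theorem swMk_add_right (i : B →+* S) (s t t' : S) :
    swMk i s (t + t') = swMk i s t + swMk i s t' := tp_add_right _ _ _ _ _

/-- The biadditive map `(s, t) ↦ s ⊗_B t`. -/
def swMkHom (i : B →+* S) : S →+ S →+ Sw i := tpHom (rAct i) (lAct i)

/-- The left action of `S` on the Sweedler coring `S ⊗_B S`. -/
def lsmul (i : B →+* S) (s : S) : Sw i →+ Sw i :=
  liftTP (rAct i) (lAct i) ((swMkHom i).comp (AddMonoidHom.mulLeft s))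
    (by
      intro m b n
      simp only [AddMonoidHom.coe_comp, Function.comp_apply, AddMonoidHom.coe_mulLeft, swMkHom,
        tpHom_apply]
      show tp _ _ (s * (m * i b)) n = tp _ _ (s * m) (i b * n)
      rw [← mul_assoc]
      exact tp_rel (rAct i) (lAct i) b (s * m) n)

@[simp] theorem lsmul_swMk (i : B →+* S) (s a b : S) :
    lsmul i s (swMk i a b) = swMk i (s * a) b := rfl

/-- The right action of `S` on the Sweedler coring `S ⊗_B S`. -/
def rsmul (i : B →+* S) (s : S) : Sw i →+ Sw i :=
  liftTP (rAct i) (lAct i)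
    (AddMonoidHom.mk' (fun a => (swMkHom i a).comp (AddMonoidHom.mulRight s)) (by
      intro a a'
      ext t
      simp only [swMkHom, AddMonoidHom.coe_comp, Function.comp_apply, tpHom_apply,
        AddMonoidHom.add_apply, AddMonoidHom.coe_mulRight]
      exact tp_add_left _ _ _ _ _))
    (by
      intro m b n
      show tp _ _ (m * i b) (n * s) = tp _ _ m ((i b * n) * s)
      rw [mul_assoc]
      exact tp_rel (rAct i) (lAct i) b m (n * s))

@[simp] theorem rsmul_swMk (i : B →+* S) (s a b : S) :
    rsmul i s (swMk i a b) = swMk i a (b * s) := rfl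

/-- The counit of the Sweedler coring, induced by multiplication. -/
def swCounit (i : B →+* S) : Sw i →+ S :=
  liftTP (rAct i) (lAct i) AddMonoidHom.mul (by
    intro m b n
    simp only [AddMonoidHom.mul_apply]
    show m * i b * n = m * (i b * n)
    rw [mul_assoc])

@[simp] theorem swCounit_swMk (i : B →+* S) (a b : S) : swCounit i (swMk i a b) = a * b := rfl

/-- The cotensor square `C ⊗_S C` of the Sweedler coring `C = S ⊗_B S`. -/
def T2 (i : B →+* S) : Type := TP S (Sw i) (Sw i) (rsmul i) (lsmul i)

instance (i : B →+* S) : AddCommGroup (T2 i) :=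
  inferInstanceAs (AddCommGroup (TP S (Sw i) (Sw i) (rsmul i) (lsmul i)))

/-- The element `x ⊗_S y` of `C ⊗_S C`. -/
def t2Mk (i : B →+* S) (x y : Sw i) : T2 i := tp (rsmul i) (lsmul i) x y

/-- The comultiplication of the Sweedler coring: `s ⊗_B t ↦ (s ⊗_B 1) ⊗_S (1 ⊗_B t)`. -/
def swComul (i : B →+* S) : Sw i →+ T2 i :=
  liftTP (rAct i) (lAct i)
    (AddMonoidHom.mk'
      (fun s => (tpHom (rsmul i) (lsmul i) (swMk i s 1)).comp (swMkHom i 1)) (by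
        intro s s'
        ext t
        simp only [AddMonoidHom.coe_comp, Function.comp_apply, AddMonoidHom.add_apply,
          tpHom_apply]
        rw [swMk_add_left]
        exact tp_add_left _ _ _ _ _))
    (by
      intro m b n
      show t2Mk i (swMk i (m * i b) 1) (swMk i 1 n) = t2Mk i (swMk i m 1) (swMk i 1 (i b * n))
      have h1 : swMk i (m * i b) 1 = rsmul i (i b) (swMk i m 1) := by
        rw [rsmul_swMk, one_mul, swMk_rel, mul_one]
      have h2 : swMk i 1 (i b * n) = lsmul i (i b) (swMk i 1 n) := by
        rw [lsmul_swMk, mul_one, ← swMk_rel, one_mul]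
      rw [h1, h2]
      exact tp_rel (rsmul i) (lsmul i) (i b) (swMk i m 1) (swMk i 1 n))

@[simp] theorem swComul_swMk (i : B →+* S) (s t : S) :
    swComul i (swMk i s t) = t2Mk i (swMk i s 1) (swMk i 1 t) := rfl

/-- The induced endomorphism `g ⊗_S g` of `C ⊗_S C`, for an `S`-bimodule map `g`. -/
def gg (i : B →+* S) (g : Sw i →+ Sw i)
    (hl : ∀ s x, g (lsmul i s x) = lsmul i s (g x))
    (hr : ∀ s x, g (rsmul i s x) = rsmul i s (g x)) : T2 i →+ T2 i :=
  liftTP (rsmul i) (lsmul i)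
    (AddMonoidHom.mk' (fun c => (tpHom (rsmul i) (lsmul i) (g c)).comp g) (by
      intro c c'
      ext d
      simp [map_add]
      rfl))
    (by
      intro m s n
      show t2Mk i (g (rsmul i s m)) (g n) = t2Mk i (g m) (g (lsmul i s n))
      rw [hr, hl]
      exact tp_rel (rsmul i) (lsmul i) s (g m) (g n))

@[simp] theorem gg_t2Mk (i : B →+* S) (g : Sw i →+ Sw i) (hl hr) (x y : Sw i) :
    gg i g hl hr (t2Mk i x y) = t2Mk i (g x) (g y) := rfl

/-- A coring endomorphism of the Sweedler coring `S ⊗_B S`: an `S`-bimodule map commuting with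
the comultiplication and the counit. -/
def IsCoringEnd (i : B →+* S) (g : Sw i →+ Sw i) : Prop :=
  (∀ x, swCounit i (g x) = swCounit i x) ∧
    ∃ (hl : ∀ s x, g (lsmul i s x) = lsmul i s (g x))
      (hr : ∀ s x, g (rsmul i s x) = rsmul i s (g x)),
      ∀ x, swComul i (g x) = gg i g hl hr (swComul i x)

/-- A coring automorphism of the Sweedler coring. -/
def IsCoringAut (i : B →+* S) (g : Sw i →+ Sw i) : Prop :=
  IsCoringEnd i g ∧ ∃ h : Sw i →+ Sw i, IsCoringEnd i h ∧
    g.comp h = AddMonoidHom.id _ ∧ h.comp g = AddMonoidHom.id _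

end

end Gro
namespace Gro

noncomputable section

variable {B S : Type} [Ring B] [Ring S]

theorem swMk_neg_left (i : B →+* S) (a t : S) : swMk i (-a) t = -swMk i a t :=
  map_neg ((swMkHom i).flip t) a

theorem swMk_neg_right (i : B →+* S) (a t : S) : swMk i a (-t) = -swMk i a t :=
  map_neg (swMkHom i a) t

/-- A `B`-subbimodule of `S` (along the ring homomorphism `i : B →+* S`). -/
structure Sub (i : B →+* S) where
  car : AddSubgroup S
  l : ∀ (b : B) (x : S), x ∈ car → i b * x ∈ car
  r : ∀ (b : B) (x : S), x ∈ car → x * i b ∈ car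

/-- The product of two subbimodules: the additive subgroup generated by products. -/
def mulSub (i : B →+* S) (I J : Sub i) : Sub i where
  car := AddSubgroup.closure {x | ∃ a ∈ I.car, ∃ c ∈ J.car, x = a * c}
  l := by
    intro b x hx
    induction hx using AddSubgroup.closure_induction with
    | mem y hy =>
      obtain ⟨a, ha, c, hc, rfl⟩ := hy
      rw [← mul_assoc]
      exact AddSubgroup.subset_closure ⟨i b * a, I.l b a ha, c, hc, rfl⟩
    | zero => simpa using AddSubgroup.zero_mem _
    | add y z _ _ hy hz => rw [mul_add]; exact AddSubgroup.add_mem _ hy hz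
    | neg y _ hy => rw [mul_neg]; exact AddSubgroup.neg_mem _ hy
  r := by
    intro b x hx
    induction hx using AddSubgroup.closure_induction with
    | mem y hy =>
      obtain ⟨a, ha, c, hc, rfl⟩ := hy
      rw [mul_assoc]
      exact AddSubgroup.subset_closure ⟨a, ha, c * i b, J.r b c hc, rfl⟩
    | zero => simpa using AddSubgroup.zero_mem _
    | add y z _ _ hy hz => rw [add_mul]; exact AddSubgroup.add_mem _ hy hz
    | neg y _ hy => rw [neg_mul]; exact AddSubgroup.neg_mem _ hy

/-- The unit subbimodule `i(B) ⊆ S`. -/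
def oneSub (i : B →+* S) : Sub i where
  car := i.toAddMonoidHom.range
  l := by rintro b _ ⟨c, rfl⟩; exact ⟨b * c, by simp⟩
  r := by rintro b _ ⟨c, rfl⟩; exact ⟨c * b, by simp⟩

/-- An invertible subbimodule. -/
def IsInvSub (i : B →+* S) (I : Sub i) : Prop :=
  ∃ J : Sub i, mulSub i I J = oneSub i ∧ mulSub i J I = oneSub i

/-- The left action of `B` on a subbimodule. -/
def lActSub (i : B →+* S) (I : Sub i) (b : B) : I.car →+ I.car :=
  AddMonoidHom.mk' (fun x => ⟨i b * ↑x, I.l b ↑x x.2⟩) (by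
    intro x y; ext; simp [mul_add])

/-- The tensor product `S ⊗_B I` for a subbimodule `I ⊆ S`. -/
def TI (i : B →+* S) (I : Sub i) : Type := TP B S I.car (rAct i) (lActSub i I)

instance (i : B →+* S) (I : Sub i) : AddCommGroup (TI i I) :=
  inferInstanceAs (AddCommGroup (TP B S I.car (rAct i) (lActSub i I)))

/-- The element `s ⊗_B x` of `S ⊗_B I`. -/
def tiMk (i : B →+* S) (I : Sub i) (s : S) (x : I.car) : TI i I :=
  tp (rAct i) (lActSub i I) s x

/-- The multiplication map `m^l_I : S ⊗_B I → S`. -/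
def mull (i : B →+* S) (I : Sub i) : TI i I →+ S :=
  liftTP (rAct i) (lActSub i I)
    (AddMonoidHom.mk' (fun s => (AddMonoidHom.mulLeft s).comp I.car.subtype) (by
      intro s s'; ext x; simp [add_mul]))
    (by
      intro m b n
      show m * i b * ↑n = m * (i b * ↑n)
      rw [mul_assoc])

@[simp] theorem mull_tiMk (i : B →+* S) (I : Sub i) (s : S) (x : I.car) :
    mull i I (tiMk i I s x) = s * ↑x := rfl

/-- The map `S ⊗_B I → S ⊗_B S` induced by the inclusion `I ⊆ S`. -/
def inclTI (i : B →+* S) (I : Sub i) : TI i I →+ Sw i :=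
  liftTP (rAct i) (lActSub i I)
    (AddMonoidHom.mk' (fun s => (swMkHom i s).comp I.car.subtype) (by
      intro s s'; ext x
      simp only [AddMonoidHom.coe_comp, Function.comp_apply, AddMonoidHom.add_apply, swMkHom,
        tpHom_apply, AddSubgroup.coe_subtype]
      exact tp_add_left _ _ _ _ _))
    (by
      intro m b n
      exact swMk_rel i b m ↑n)

@[simp] theorem inclTI_tiMk (i : B →+* S) (I : Sub i) (s : S) (x : I.car) :
    inclTI i I (tiMk i I s x) = swMk i s ↑x := rfl

/-- The map `S ⊗_B I → S ⊗_B J` induced by an inclusion `I ⊆ J` of subbimodules. -/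
def tiMap (i : B →+* S) (I J : Sub i) (h : I.car ≤ J.car) : TI i I →+ TI i J :=
  liftTP (rAct i) (lActSub i I)
    (AddMonoidHom.mk' (fun s =>
      (tpHom (rAct i) (lActSub i J) s).comp (AddMonoidHom.mk'
        (fun x : I.car => (⟨↑x, h x.2⟩ : J.car)) (by intro x y; rfl))) (by
      intro s s'; ext x
      simp only [AddMonoidHom.coe_comp, Function.comp_apply, AddMonoidHom.mk'_apply,
        AddMonoidHom.add_apply, tpHom_apply]
      exact tp_add_left _ _ _ _ _))
    (by
      intro m b n
      exact tp_rel (rAct i) (lActSub i J) b m ⟨↑n, h n.2⟩)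

/-- The subbimodule `J(g) = {s ∈ S | g(s ⊗ 1) = 1 ⊗ s}` associated to a coring endomorphism. -/
def JSub (i : B →+* S) (g : Sw i →+ Sw i) (hg : IsCoringEnd i g) : Sub i where
  car :=
    { carrier := {s : S | g (swMk i s 1) = swMk i 1 s}
      zero_mem' := by
        have h0 : swMk i (0 : S) 1 = 0 := tp_zero_left _ _ _
        have h0' : swMk i 1 (0 : S) = 0 := tp_zero_right _ _ _
        simp only [Set.mem_setOf_eq, h0, h0', map_zero]
      add_mem' := by
        intro a c ha hc
        simp only [Set.mem_setOf_eq] at *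
        rw [swMk_add_left, map_add, ha, hc, ← swMk_add_right]
      neg_mem' := by
        intro a ha
        simp only [Set.mem_setOf_eq] at *
        rw [swMk_neg_left, map_neg, ha, ← swMk_neg_right] }
  l := by
    intro b x hx
    obtain ⟨-, hl, hr, -⟩ := hg
    show g (swMk i (i b * x) 1) = swMk i 1 (i b * x)
    have h1 : swMk i (i b * x) 1 = lsmul i (i b) (swMk i x 1) := by rw [lsmul_swMk]
    rw [h1, hl, hx, lsmul_swMk, mul_one]
    have h2 := swMk_rel i b 1 x
    rw [one_mul] at h2
    exact h2
  r := by
    intro b x hx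
    obtain ⟨-, hl, hr, -⟩ := hg
    show g (swMk i (x * i b) 1) = swMk i 1 (x * i b)
    have h1 : swMk i (x * i b) 1 = rsmul i (i b) (swMk i x 1) := by
      rw [rsmul_swMk, one_mul, swMk_rel, mul_one]
    rw [h1, hr, hx]
    rfl

/-- The biadditive map underlying `Γ(I)`: `(u ⊗ x, s') ↦ u ⊗ (x s')`. -/
def alphaI (i : B →+* S) (I : Sub i) : TI i I →+ (S →+ Sw i) :=
  liftTP (rAct i) (lActSub i I)
    (AddMonoidHom.mk' (fun u =>
      AddMonoidHom.mk' (fun x : I.car =>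
        AddMonoidHom.mk' (fun t => swMk i u (↑x * t)) (by
          intro t t'; show swMk i u (↑x * (t + t')) = _; rw [mul_add, swMk_add_right])) (by
        intro x y; ext t
        simp only [AddMonoidHom.mk'_apply, AddMonoidHom.add_apply, AddSubgroup.coe_add]
        rw [add_mul, swMk_add_right])) (by
      intro u u'; ext x t
      simp only [AddMonoidHom.mk'_apply, AddMonoidHom.add_apply]
      rw [swMk_add_left]))
    (by
      intro m b n; ext t
      simp only [AddMonoidHom.mk'_apply]
      show swMk i (m * i b) (↑n * t) = swMk i m (↑(lActSub i I b n) * t)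
      rw [swMk_rel]
      congr 1
      show i b * (↑n * t) = (i b * ↑n) * t
      rw [mul_assoc])

@[simp] theorem alphaI_tiMk (i : B →+* S) (I : Sub i) (u : S) (x : I.car) (t : S) :
    alphaI i I (tiMk i I u x) t = swMk i u (↑x * t) := rfl

/-- The right action of `B` on `S ⊗_B I`, through the last factor. -/
def ractTI (i : B →+* S) (I : Sub i) (b : B) : TI i I →+ TI i I :=
  liftTP (rAct i) (lActSub i I)
    (AddMonoidHom.mk' (fun s =>
      AddMonoidHom.mk' (fun x : I.car => tiMk i I s ⟨↑x * i b, I.r b ↑x x.2⟩) (by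
        intro x y
        have hxy : (⟨(↑x + ↑y) * i b, I.r b _ (AddSubgroup.add_mem _ x.2 y.2)⟩ : I.car)
            = ⟨↑x * i b, I.r b ↑x x.2⟩ + ⟨↑y * i b, I.r b ↑y y.2⟩ := by
          ext; simp [add_mul]
        show tiMk i I s ⟨(↑x + ↑y) * i b, _⟩ = _
        rw [hxy]
        exact tp_add_right _ _ _ _ _)) (by
      intro s s'; ext x
      simp only [AddMonoidHom.mk'_apply, AddMonoidHom.add_apply]
      exact tp_add_left _ _ _ _ _))
    (by
      intro m b' n
      show tiMk i I (m * i b') ⟨↑n * i b, _⟩ = tiMk i I m ⟨↑(lActSub i I b' n) * i b, _⟩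
      have := tp_rel (rAct i) (lActSub i I) b' m (⟨↑n * i b, I.r b ↑n n.2⟩ : I.car)
      refine this.trans ?_
      congr 1
      ext
      show i b' * (↑n * i b) = (i b' * ↑n) * i b
      rw [mul_assoc])

theorem mull_ractTI (i : B →+* S) (I : Sub i) (b : B) :
    (mull i I).comp (ractTI i I b) = (AddMonoidHom.mulRight (i b)).comp (mull i I) :=
  hom_ext (rAct i) (lActSub i I) (fun m n => by
    show mull i I (ractTI i I b (tiMk i I m n)) = mull i I (tiMk i I m n) * i b
    show m * (↑n * i b) = (m * ↑n) * i b
    rw [mul_assoc])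

theorem alphaI_ractTI (i : B →+* S) (I : Sub i) (b : B) (z : TI i I) :
    alphaI i I (ractTI i I b z) = (alphaI i I z).comp (AddMonoidHom.mulLeft (i b)) := by
  have h : (alphaI i I).comp (ractTI i I b) =
      (AddMonoidHom.mk' (fun z => (alphaI i I z).comp (AddMonoidHom.mulLeft (i b))) (by
        intro z z'; ext t; simp [map_add])) := by
    refine hom_ext (rAct i) (lActSub i I) (fun m n => ?_)
    ext t
    show swMk i m ((↑n * i b) * t) = swMk i m (↑n * (i b * t))
    rw [mul_assoc]
  exact DFunLike.congr_fun h z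

/-- The coring endomorphism `Γ(I) = (1 ⊗ m^r_I) ∘ ((m^l_I)⁻¹ ⊗ 1)` associated to
`I ∈ I^l_B(S)`. -/
def GammaMap (i : B →+* S) (I : Sub i) (h : Function.Bijective (mull i I)) :
    Sw i →+ Sw i :=
  liftTP (rAct i) (lAct i)
    (AddMonoidHom.mk'
      (fun s => alphaI i I ((AddEquiv.ofBijective (mull i I) h).symm s)) (by
      intro s s'
      show alphaI i I ((AddEquiv.ofBijective (mull i I) h).symm (s + s')) = _
      rw [map_add, map_add]))
    (by
      intro m b n
      show alphaI i I ((AddEquiv.ofBijective (mull i I) h).symm (m * i b)) n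
        = alphaI i I ((AddEquiv.ofBijective (mull i I) h).symm m) (i b * n)
      set e := AddEquiv.ofBijective (mull i I) h with he
      have hsymm : ∀ s, mull i I (e.symm s) = s := fun s => e.apply_symm_apply s
      have e1 : e.symm (m * i b) = ractTI i I b (e.symm m) := by
        apply h.1
        rw [hsymm]
        have := DFunLike.congr_fun (mull_ractTI i I b) (e.symm m)
        simp only [AddMonoidHom.coe_comp, Function.comp_apply, AddMonoidHom.coe_mulRight] at this
        rw [this, hsymm]
      rw [e1, alphaI_ractTI]
      rfl)

end

end Gro


/-!
`m^l_{i(B)}` is inverted by `s ↦ s ⊗ 1`. For the product, the isomorphism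
`S ⊗_B I ≅ S` turns `S ⊗_B J` into `S ⊗_B I ⊗_B J`, and multiplying the last two factors gives a
map `S ⊗_B J → S ⊗_B IJ` which is surjective because `IJ` is generated by products and whose
composite with `m^l_{IJ}` is `m^l_J`. Hence `m^l_{IJ}` is bijective as soon as `m^l_J` is.
-/

namespace Gro

noncomputable section

variable {B S : Type} [Ring B] [Ring S]

theorem mull_oneSub_bijective (i : B →+* S) : Function.Bijective (mull i (oneSub i)) := by
  let one : (oneSub i).car := ⟨1, 1, map_one i⟩
  let inv : S →+ TI i (oneSub i) :=
    AddMonoidHom.mk' (fun s => tiMk i (oneSub i) s one) (fun s s' => tp_add_left _ _ _ _ _)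
  have inv_mull : inv.comp (mull i (oneSub i)) = AddMonoidHom.id _ := by
    refine hom_ext (rAct i) (lActSub i (oneSub i)) fun s ⟨_, b, hb⟩ => ?_
    subst hb
    refine (tp_rel (rAct i) (lActSub i (oneSub i)) b s one).trans ?_
    exact congrArg (tiMk i (oneSub i) s) (Subtype.ext (mul_one (i b)))
  refine Function.bijective_iff_has_inverse.2 ⟨inv, DFunLike.congr_fun inv_mull, fun s => ?_⟩
  exact mul_one s

theorem mul_mem_mulSub (i : B →+* S) (I J : Sub i) {x y : S} (hx : x ∈ I.car) (hy : y ∈ J.car) :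
    x * y ∈ (mulSub i I J).car :=
  AddSubgroup.subset_closure ⟨x, hx, y, hy, rfl⟩

def mulSubPair (i : B →+* S) (I J : Sub i) : I.car →+ J.car →+ (mulSub i I J).car :=
  AddMonoidHom.mk'
    (fun x => ((AddMonoidHom.mulLeft (x : S)).comp J.car.subtype).codRestrict _
      fun y => mul_mem_mulSub i I J x.2 y.2)
    fun x x' => by ext y; exact add_mul (x : S) x' y

/-- `(u ⊗ x, y) ↦ u ⊗ x y`, from `(S ⊗_B I) × J` to `S ⊗_B IJ`. -/
def mulTI (i : B →+* S) (I J : Sub i) : TI i I →+ J.car →+ TI i (mulSub i I J) :=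
  liftTP (rAct i) (lActSub i I)
    ((AddMonoidHom.compHom.comp (tpHom (rAct i) (lActSub i (mulSub i I J)))).compl₂
      (mulSubPair i I J))
    fun m b x => by
      ext y
      refine (tp_rel (rAct i) (lActSub i (mulSub i I J)) b m _).trans ?_
      exact congrArg (tiMk i (mulSub i I J) m) (Subtype.ext (mul_assoc (i b) x y).symm)

theorem mull_mulTI (i : B →+* S) (I J : Sub i) (z : TI i I) (y : J.car) :
    mull i (mulSub i I J) (mulTI i I J z y) = mull i I z * y :=
  DFunLike.congr_fun (hom_ext (rAct i) (lActSub i I)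
    (φ := (mull i (mulSub i I J)).comp ((mulTI i I J).flip y))
    (ψ := (AddMonoidHom.mulRight (y : S)).comp (mull i I))
    fun u x => (mul_assoc u x y).symm) z

theorem mulTI_ractTI (i : B →+* S) (I J : Sub i) (b : B) (z : TI i I) (y : J.car) :
    mulTI i I J (ractTI i I b z) y = mulTI i I J z (lActSub i J b y) :=
  DFunLike.congr_fun (hom_ext (rAct i) (lActSub i I)
    (φ := ((mulTI i I J).flip y).comp (ractTI i I b))
    (ψ := (mulTI i I J).flip (lActSub i J b y))
    fun u x => congrArg (tiMk i (mulSub i I J) u) (Subtype.ext (mul_assoc (x : S) (i b) y))) z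

section Transfer

variable (i : B →+* S) {I : Sub i} (hI : Function.Bijective (mull i I))

theorem ofBijective_mull_symm_mul (u : S) {x : S} (hx : x ∈ I.car) :
    (AddEquiv.ofBijective (mull i I) hI).symm (u * x) = tiMk i I u ⟨x, hx⟩ :=
  hI.1 ((AddEquiv.ofBijective (mull i I) hI).apply_symm_apply _)

theorem ofBijective_mull_symm_mul_right (s : S) (b : B) :
    (AddEquiv.ofBijective (mull i I) hI).symm (s * i b)
      = ractTI i I b ((AddEquiv.ofBijective (mull i I) hI).symm s) := by
  apply hI.1
  have := DFunLike.congr_fun (mull_ractTI i I b) ((AddEquiv.ofBijective (mull i I) hI).symm s)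
  simp_all

/-- `s ⊗ y ↦ Σ u_k ⊗ x_k y`, where `(m^l_I)⁻¹ s = Σ u_k ⊗ x_k`. -/
def transferTI (J : Sub i) : TI i J →+ TI i (mulSub i I J) :=
  liftTP (rAct i) (lActSub i J)
    ((mulTI i I J).comp (AddEquiv.ofBijective (mull i I) hI).symm.toAddMonoidHom)
    fun s b y => by
      show mulTI i I J ((AddEquiv.ofBijective (mull i I) hI).symm (s * i b)) y
        = mulTI i I J ((AddEquiv.ofBijective (mull i I) hI).symm s) (lActSub i J b y)
      rw [ofBijective_mull_symm_mul_right, mulTI_ractTI]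

theorem mull_transferTI (J : Sub i) (z : TI i J) :
    mull i (mulSub i I J) (transferTI i hI J z) = mull i J z :=
  DFunLike.congr_fun (hom_ext (rAct i) (lActSub i J)
    (φ := (mull i (mulSub i I J)).comp (transferTI i hI J)) (ψ := mull i J)
    fun s y => (mull_mulTI i I J _ y).trans
      (congrArg (· * (y : S)) ((AddEquiv.ofBijective (mull i I) hI).apply_symm_apply s))) z

theorem tiMk_mem_range_transferTI (J : Sub i) (u : S) {z : S} (hz : z ∈ (mulSub i I J).car) :
    tiMk i (mulSub i I J) u ⟨z, hz⟩ ∈ (transferTI i hI J).range := by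
  induction hz using AddSubgroup.closure_induction with
  | mem _ hz =>
    obtain ⟨x, hx, y, hy, rfl⟩ := hz
    refine ⟨tiMk i J (u * x) ⟨y, hy⟩, ?_⟩
    show mulTI i I J ((AddEquiv.ofBijective (mull i I) hI).symm (u * x)) ⟨y, hy⟩ = _
    rw [ofBijective_mull_symm_mul i hI u hx]
    rfl
  | zero =>
    convert AddSubgroup.zero_mem _
    exact tp_zero_right (rAct i) (lActSub i (mulSub i I J)) u
  | add x y hx hy hxmem hymem =>
    convert (transferTI i hI J).range.add_mem hxmem hymem using 1
    exact tp_add_right (rAct i) (lActSub i (mulSub i I J)) u ⟨x, hx⟩ ⟨y, hy⟩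
  | neg x hx hxmem =>
    convert (transferTI i hI J).range.neg_mem hxmem using 1
    exact map_neg (tpHom (rAct i) (lActSub i (mulSub i I J)) u) ⟨x, hx⟩

theorem transferTI_surjective (J : Sub i) : Function.Surjective (transferTI i hI J) := by
  rw [← AddMonoidHom.range_eq_top, eq_top_iff]
  rintro z -
  induction z using tp_induction (rAct i) (lActSub i (mulSub i I J)) with
  | tmul u x => exact tiMk_mem_range_transferTI i hI J u x.2
  | zero => exact AddSubgroup.zero_mem _
  | add x y hx hy => exact AddSubgroup.add_mem _ hx hy
  | neg x hx => exact AddSubgroup.neg_mem _ hx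

end Transfer

theorem mull_mulSub_bijective (i : B →+* S) {I J : Sub i} (hI : Function.Bijective (mull i I))
    (hJ : Function.Bijective (mull i J)) :
    Function.Bijective (mull i (mulSub i I J)) := by
  have hcomp : mull i (mulSub i I J) ∘ transferTI i hI J = mull i J :=
    funext (mull_transferTI i hI J)
  exact ⟨(hcomp ▸ hJ.1).of_comp_right (transferTI_surjective i hI J),
    Function.Surjective.of_comp (hcomp ▸ hJ.2)⟩

end

end Gro

open Gro in
theorem leftInvertible_subbimodules_submonoid_general {B S : Type} [Ring B] [Ring S] (i : B →+* S) :
    Function.Bijective (mull i (oneSub i)) ∧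
    (∀ I J : Sub i, Function.Bijective (mull i I) → Function.Bijective (mull i J) →
      Function.Bijective (mull i (mulSub i I J))) :=
  ⟨mull_oneSub_bijective i, fun _ _ hI hJ => mull_mulSub_bijective i hI hJ⟩

open Gro in
/-- For an injective ring extension `i : B → S`, the subset `I^l_B(S)` of the monoid of
`B`-subbimodules of `S`, consisting of those `I` with `m^l_I : S ⊗_B I → S` bijective,
is a submonoid: it contains the identity `i(B)` and is closed under multiplication. -/
theorem leftInvertible_subbimodules_submonoid {B S : Type} [Ring B] [Ring S] (i : B →+* S)
    (hi : Function.Injective i) :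
    Function.Bijective (mull i (oneSub i)) ∧
    (∀ I J : Sub i, Function.Bijective (mull i I) → Function.Bijective (mull i J) →
      Function.Bijective (mull i (mulSub i I J))) :=
  leftInvertible_subbimodules_submonoid_general i
end

section
/- Let i : B → S be a ring extension with S faithfully flat as a left B-module. Then the functor S ⊗_B - : B-Mod → S-Mod is comonadic. -/
open CategoryTheory CategoryTheory.Limits

universe u

instance Comonad.preservesLimitOfIsCoreflexivePair_of_preservesFiniteLimits
    {C D : Type*} [Category C] [Category D] (F : C ⥤ D) [PreservesFiniteLimits F] :
    Comonad.PreservesLimitOfIsCoreflexivePair F :=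
  ⟨fun _ _ _ _ _ => inferInstance⟩

/-- If `S` is faithfully flat as a left `B`-module (that is, the base-change functor
`S ⊗_B - : B-Mod ⥤ S-Mod` is exact and conservative), then the functor
`S ⊗_B - : B-Mod ⥤ S-Mod` is comonadic. -/
theorem baseChange_comonadic_of_faithfullyFlat
    {B S : Type u} [Ring B] [Ring S] (i : B →+* S)
    (F : ModuleCat.{u} B ⥤ ModuleCat.{u} S)
    (adj : F ⊣ ModuleCat.restrictScalars i)
    [PreservesFiniteLimits F] [F.ReflectsIsomorphisms] :
    Nonempty (ComonadicLeftAdjoint F) :=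
  ⟨Comonad.comonadicOfHasPreservesCoreflexiveEqualizersOfReflectsIsomorphisms adj⟩
end

section
/- Let i : B → S be a ring extension such that B is a direct summand of S as a B-bimodule. Then the functor S ⊗_B - : B-Mod → S-Mod is comonadic. -/
/-!
The unit `X → S ⊗_B X` of base change has a natural retraction. Since `F ⊣ restrictScalars i ⊣
coextendScalars i` is an adjoint triple, it suffices to split the evaluation-at-one counit
`Hom_B(S, X) → X` of the second adjunction naturally, which `x ↦ (s ↦ p s • x)` does. A naturally
split unit exhibits every `f` as a retract of `G (F f)`, so `F` reflects isomorphisms, and splits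
the equalizer of every `F`-cosplit pair, so `F` preserves it; Beck's theorem concludes.
-/

open CategoryTheory CategoryTheory.Limits

universe u

namespace CategoryTheory

section NaturalRetract

variable {C : Type*} [Category C] {T : C ⥤ C} {τ : 𝟭 C ⟶ T} {σ : T ⟶ 𝟭 C}

def RetractArrow.ofNatTransRetraction (hτσ : τ ≫ σ = 𝟙 _) {X Y : C} (f : X ⟶ Y) :
    RetractArrow f (T.map f) where
  i := Arrow.homMk (τ.app X) (τ.app Y) (τ.naturality f).symm
  r := Arrow.homMk (σ.app X) (σ.app Y) (σ.naturality f).symm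
  retract := by ext <;> simp [← NatTrans.comp_app, hτσ]

noncomputable def IsSplitEqualizer.ofNatTransRetraction (hτσ : τ ≫ σ = 𝟙 _) {A B : C}
    {f g : A ⟶ B} [HasEqualizer f g] {E : C} {ι : E ⟶ T.obj A}
    (q : IsSplitEqualizer (T.map f) (T.map g) ι) :
    IsSplitEqualizer f g (equalizer.ι f g) :=
  have hτ {X Y : C} (h : X ⟶ Y) : h ≫ τ.app Y = τ.app X ≫ T.map h := τ.naturality h
  have hσ {X Y : C} (h : X ⟶ Y) : T.map h ≫ σ.app Y = σ.app X ≫ h := σ.naturality h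
  let k : E ⟶ equalizer f g := equalizer.lift (ι ≫ σ.app A) <| by
    rw [Category.assoc, Category.assoc, ← hσ, ← hσ, q.condition_assoc]
  have top : f ≫ τ.app B ≫ q.rightRetraction ≫ σ.app A
      = (τ.app A ≫ q.leftRetraction ≫ k) ≫ equalizer.ι f g := by
    rw [reassoc_of% (hτ f), q.top_rightRetraction_assoc]
    simp only [Category.assoc, k, equalizer.lift_ι]
  have bottom : g ≫ τ.app B ≫ q.rightRetraction ≫ σ.app A = 𝟙 A := by
    rw [reassoc_of% (hτ g), q.bottom_rightRetraction_assoc, ← NatTrans.comp_app, hτσ]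
    rfl
  { leftRetraction := τ.app A ≫ q.leftRetraction ≫ k
    rightRetraction := τ.app B ≫ q.rightRetraction ≫ σ.app A
    condition := equalizer.condition f g
    ι_leftRetraction := by
      rw [← cancel_mono (equalizer.ι f g), Category.assoc, ← top, equalizer.condition_assoc,
        bottom, Category.comp_id, Category.id_comp]
    bottom_rightRetraction := bottom
    top_rightRetraction := top }

end NaturalRetract

section Comonadicity

universe v u₁ u₂

variable {C : Type u₁} {D : Type u₂} [Category.{v} C] [Category.{v} D] {F : C ⥤ D} {G : D ⥤ C}
  {adj : F ⊣ G} {ρ : F ⋙ G ⟶ 𝟭 C}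

lemma Functor.reflectsIsomorphisms_of_unit_comp_eq_id (hρ : adj.unit ≫ ρ = 𝟙 _) :
    F.ReflectsIsomorphisms where
  reflects f _ :=
    MorphismProperty.of_retract (P := .isomorphisms C) (RetractArrow.ofNatTransRetraction hρ f)
      (inferInstanceAs (IsIso (G.map (F.map f))))

lemma Comonad.preservesLimitOfIsCosplitPair_of_unit_comp_eq_id [HasEqualizers C]
    (hρ : adj.unit ≫ ρ = 𝟙 _) : Comonad.PreservesLimitOfIsCosplitPair F where
  out f g _ :=
    let q := IsSplitEqualizer.ofNatTransRetraction hρ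
      ((HasSplitEqualizer.isSplitEqualizer (F.map f) (F.map g)).map G)
    preservesLimit_of_preserves_limit_cone q.isEqualizer
      ((isLimitMapConeForkEquiv F q.condition).symm (q.map F).isEqualizer)

theorem Adjunction.nonempty_comonadicLeftAdjoint_of_unit_comp_eq_id [HasEqualizers C]
    (hρ : adj.unit ≫ ρ = 𝟙 _) : Nonempty (ComonadicLeftAdjoint F) :=
  have := Functor.reflectsIsomorphisms_of_unit_comp_eq_id hρ
  have := Comonad.preservesLimitOfIsCosplitPair_of_unit_comp_eq_id hρ
  have : Comonad.HasEqualizerOfIsCosplitPair F := ⟨fun _ _ _ => inferInstance⟩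
  ⟨Comonad.comonadicOfHasPreservesFSplitEqualizersOfReflectsIsomorphisms adj⟩

end Comonadicity

section AdjointTriple

variable {C D : Type*} [Category C] [Category D] {F : C ⥤ D} {G : D ⥤ C} {H : C ⥤ D}

/-- `G` applied to the transpose `F ⟶ H` of `θ`, followed by the counit of `G ⊣ H`. -/
def Adjunction.unitRetractionOfCounitSection (adj₁ : F ⊣ G) (adj₂ : G ⊣ H)
    (θ : 𝟭 C ⟶ H ⋙ G) : F ⋙ G ⟶ 𝟭 C :=
  Functor.whiskerRight (Functor.whiskerRight θ F ≫ Functor.whiskerLeft H adj₁.counit) G ≫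
    adj₂.counit

lemma Adjunction.unit_comp_unitRetractionOfCounitSection (adj₁ : F ⊣ G) (adj₂ : G ⊣ H)
    {θ : 𝟭 C ⟶ H ⋙ G} (hθ : θ ≫ adj₂.counit = 𝟙 _) :
    adj₁.unit ≫ adj₁.unitRetractionOfCounitSection adj₂ θ = 𝟙 _ := by
  ext X
  simpa [unitRetractionOfCounitSection] using congr_app hθ X

end AdjointTriple

end CategoryTheory

namespace ModuleCat

universe v u₁ u₂

variable {B : Type u₁} {S : Type u₂} [Ring B] [Ring S] (i : B →+* S) (p : S →+ B)
  (hpl : ∀ (b : B) (s : S), p (i b * s) = b * p s)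
  (hpr : ∀ (b : B) (s : S), p (s * i b) = p s * b)

noncomputable def toRestrictCoextendScalars :
    𝟭 (ModuleCat.{max v u₂} B) ⟶ coextendScalars i ⋙ restrictScalars i where
  app X := ofHom (Y := (restrictScalars i).obj ((coextendScalars i).obj X))
    { toFun x :=
        { toFun s := p s • x
          map_add' (s t : S) := by
            change p (s + t) • x = p s • x + p t • x
            rw [map_add, add_smul]
          map_smul' b (s : S) := by
            change p (i b * s) • x = b • p s • x
            rw [hpl, mul_smul] }
      map_add' x y := LinearMap.ext fun s => smul_add (p s) x y
      map_smul' b x := LinearMap.ext fun (s : S) => by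
        change p s • b • x = p (s * i b) • x
        rw [hpr, mul_smul] }
  naturality X Y u := by
    ext x : 2
    refine LinearMap.ext fun s => ?_
    exact (map_smul u.hom (p s) x).symm

lemma toRestrictCoextendScalars_comp_counit (hp : p 1 = 1) :
    toRestrictCoextendScalars i p hpl hpr ≫ (restrictCoextendScalarsAdj i).counit = 𝟙 _ := by
  ext X x
  change p 1 • x = x
  rw [hp, one_smul]

end ModuleCat

/-- If `B` is a direct summand of `S` as a `B`-bimodule (there is a `B`-bimodule retraction
`p : S → B` of `i`), then the base-change functor `S ⊗_B - : B-Mod ⥤ S-Mod` is comonadic. -/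
theorem baseChange_comonadic_of_directSummand
    {B S : Type u} [Ring B] [Ring S] (i : B →+* S)
    (p : S →+ B) (hpi : ∀ b : B, p (i b) = b)
    (hpl : ∀ (b : B) (s : S), p (i b * s) = b * p s)
    (hpr : ∀ (b : B) (s : S), p (s * i b) = p s * b)
    (F : ModuleCat.{u} B ⥤ ModuleCat.{u} S)
    (adj : F ⊣ ModuleCat.restrictScalars i) :
    Nonempty (ComonadicLeftAdjoint F) := by
  have hp : p 1 = 1 := by simpa using hpi 1
  exact adj.nonempty_comonadicLeftAdjoint_of_unit_comp_eq_id <|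
    adj.unit_comp_unitRetractionOfCounitSection (ModuleCat.restrictCoextendScalarsAdj i) <|
      ModuleCat.toRestrictCoextendScalars_comp_counit i p hpl hpr hp
end
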